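/- Let X be a pseudometric space of diameter ≤ 1 and ε a modulus. If R is an ε-predicate on X (monotone, infima-preserving, satisfying the continuity condition with respect to ε), then the function f_R : X → [0,1] defined by f_R(x) = inf { r ∈ [0,1] | x ∈ R(r) } is uniformly continuous with modulus ε, and moreover R(r) = {x | f_R(x) ≤ r} for every r. -/

import Mathlib

open Set

/-- A pseudometric space of diameter ≤ 1. -/
structure PMet where
  carrier : Type
  d : carrier → carrier → ℝ
  d_self : ∀ x, d x x = 0
  d_symm : ∀ x y, d x y = d y x
  d_triangle : ∀ x y z, d x z ≤ d x y + d y z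
  d_nonneg : ∀ x y, 0 ≤ d x y
  d_le_one : ∀ x y, d x y ≤ 1

/-- Uniform continuity of a map between diameter-≤1 pseudometric spaces. -/
def UnifCont (X Y : PMet) (f : X.carrier → Y.carrier) : Prop :=
  ∀ e : ℝ, 0 < e → ∃ δ : ℝ, 0 < δ ∧ ∀ x y, X.d x y < δ → Y.d (f x) (f y) < e

/-- A modulus of uniform continuity: increasing, infima-preserving, fixing 0,
    mapping [0,1] into [0,1]. -/
def IsModulus (μ : ℝ → ℝ) : Prop :=
  μ 0 = 0 ∧
  (∀ r ∈ Icc (0:ℝ) 1, μ r ∈ Icc (0:ℝ) 1) ∧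
  (∀ r s, r ∈ Icc (0:ℝ) 1 → s ∈ Icc (0:ℝ) 1 → r ≤ s → μ r ≤ μ s) ∧
  (∀ S : Set ℝ, S.Nonempty → S ⊆ Icc (0:ℝ) 1 → μ (sInf S) = sInf (μ '' S))

/-- `f` is uniformly continuous with modulus `μ`. -/
def HasModulus (X Y : PMet) (f : X.carrier → Y.carrier) (μ : ℝ → ℝ) : Prop :=
  ∀ x y, Y.d (f x) (f y) ≤ μ (X.d x y)

/-- An ε-predicate on `X`: a monotone family of subsets, preserving nonempty
    infima as intersections, satisfying the ε-continuity condition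
    (with truncated addition on [0,1]). -/
def IsPred (X : PMet) (μ : ℝ → ℝ) (R : ℝ → Set X.carrier) : Prop :=
  (∀ r s, r ∈ Icc (0:ℝ) 1 → s ∈ Icc (0:ℝ) 1 → r ≤ s → R r ⊆ R s) ∧
  (∀ S : Set ℝ, S.Nonempty → S ⊆ Icc (0:ℝ) 1 → R (sInf S) = ⋂ r ∈ S, R r) ∧
  (∀ r s, r ∈ Icc (0:ℝ) 1 → s ∈ Icc (0:ℝ) 1 → ∀ x y, x ∈ R r → X.d x y ≤ s →
     y ∈ R (min (r + μ s) 1))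

/-- The product pseudometric space with the max metric. -/
def prodPMet (Y Z : PMet) : PMet where
  carrier := Y.carrier × Z.carrier
  d p q := max (Y.d p.1 q.1) (Z.d p.2 q.2)
  d_self p := by simp [Y.d_self, Z.d_self]
  d_symm p q := by (try simp only []); rw [Y.d_symm, Z.d_symm]
  d_triangle p q r := max_le
    (le_trans (Y.d_triangle _ _ _) (add_le_add (le_max_left _ _) (le_max_left _ _)))
    (le_trans (Z.d_triangle _ _ _) (add_le_add (le_max_right _ _) (le_max_right _ _)))
  d_nonneg p q := le_trans (Y.d_nonneg _ _) (le_max_left _ _)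
  d_le_one p q := max_le (Y.d_le_one _ _) (Z.d_le_one _ _)

/-- the function f_R associated to an ε-predicate R is uniformly
    continuous with modulus ε, and R is recovered as its sublevel family. -/
theorem pred_to_function (X : PMet) (ε : ℝ → ℝ) (hε : IsModulus ε)
    (R : ℝ → Set X.carrier) (hR : IsPred X ε R) (hR1 : R 1 = Set.univ) :
    (∀ x y, |sInf {r | r ∈ Icc (0:ℝ) 1 ∧ x ∈ R r} -
              sInf {r | r ∈ Icc (0:ℝ) 1 ∧ y ∈ R r}| ≤ ε (X.d x y)) ∧
    (∀ r ∈ Icc (0:ℝ) 1, R r = {x | sInf {s | s ∈ Icc (0:ℝ) 1 ∧ x ∈ R s} ≤ r}) := by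
  obtain ⟨hμ0, hμIcc, hμmono, hμinf⟩ := hε
  obtain ⟨hmono, hinf, hcont⟩ := hR
  set f : X.carrier → ℝ := fun x => sInf {r | r ∈ Icc (0:ℝ) 1 ∧ x ∈ R r} with hf
  have hne : ∀ x, ({r | r ∈ Icc (0:ℝ) 1 ∧ x ∈ R r}).Nonempty := fun x =>
    ⟨1, ⟨⟨zero_le_one, le_refl 1⟩, by rw [hR1]; trivial⟩⟩
  have hsub : ∀ x, {r | r ∈ Icc (0:ℝ) 1 ∧ x ∈ R r} ⊆ Icc (0:ℝ) 1 := fun x r hr => hr.1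
  have hbdd : ∀ x, BddBelow {r | r ∈ Icc (0:ℝ) 1 ∧ x ∈ R r} :=
    fun x => ⟨0, fun r hr => hr.1.1⟩
  have hfmem : ∀ x, f x ∈ Icc (0:ℝ) 1 := fun x =>
    ⟨le_csInf (hne x) (fun r hr => hr.1.1),
     csInf_le (hbdd x) ⟨⟨zero_le_one, le_refl 1⟩, by rw [hR1]; trivial⟩⟩
  have hxR : ∀ x, x ∈ R (f x) := by
    intro x
    rw [hf]
    simp only []
    rw [hinf _ (hne x) (hsub x)]
    exact mem_iInter₂.2 fun r hr => hr.2
  have key : ∀ x y, f y ≤ f x + ε (X.d x y) := by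
    intro x y
    have hd : X.d x y ∈ Icc (0:ℝ) 1 := ⟨X.d_nonneg _ _, X.d_le_one _ _⟩
    have hεd := hμIcc _ hd
    have hy := hcont (f x) (X.d x y) (hfmem x) hd x y (hxR x) le_rfl
    have hmem : min (f x + ε (X.d x y)) 1 ∈ Icc (0:ℝ) 1 :=
      ⟨le_min (by linarith [(hfmem x).1, hεd.1]) zero_le_one, min_le_right _ _⟩
    have : f y ≤ min (f x + ε (X.d x y)) 1 := csInf_le (hbdd y) ⟨hmem, hy⟩
    exact this.trans (min_le_left _ _)
  constructor
  · intro x y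
    have h1 := key x y
    have h2 := key y x
    rw [X.d_symm y x] at h2
    rw [abs_sub_le_iff]
    exact ⟨by linarith, by linarith⟩
  · intro r hr
    ext x
    simp only [mem_setOf_eq]
    constructor
    · intro hx; exact csInf_le (hbdd x) ⟨hr, hx⟩
    · intro hx; exact hmono (f x) r (hfmem x) hr hx (hxR x)
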